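/- Let c₁, c₂, c₃ ∈ ℝ. Then the functions u(x,t) = c₁/t − 6x/(5t), v(x,t) = −c₁²/(3t²) + c₂·t^{−4/5} + 4c₁x/(5t²) − 12x²/(25t²), and w(x,t) = −c₁c₂/(3t^{9/5}) + c₁³/(27t³) + c₃·t^{−6/5} − 2c₁²x/(15t³) + 2c₂x/(5t^{9/5}) + 4c₁x²/(25t³) − 8x³/(125t³) form a solution of (KB) on ℝ × (0,∞). -/
import Mathlib


/-- Partial derivative with respect to the first (space) variable. -/
noncomputable def pdx (f : ℝ → ℝ → ℝ) (x t : ℝ) : ℝ := deriv (fun y => f y t) x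

/-- Partial derivative with respect to the second (time) variable. -/
noncomputable def pdt (f : ℝ → ℝ → ℝ) (x t : ℝ) : ℝ := deriv (fun s => f x s) t

/-- The three-field Kaup–Boussinesq system (KB) holds for `(u,v,w)` at the point `(x,t)`:
`∂ₜu = (3/2)u∂ₓu + ∂ₓv`, `∂ₜv = v∂ₓu + (1/2)u∂ₓv + ∂ₓw`,
`∂ₜw = −(1/4)∂ₓ³u + w∂ₓu + (1/2)u∂ₓw`. -/
def KBAt (u v w : ℝ → ℝ → ℝ) (x t : ℝ) : Prop :=
  pdt u x t = 3/2 * u x t * pdx u x t + pdx v x t ∧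
  pdt v x t = v x t * pdx u x t + 1/2 * u x t * pdx v x t + pdx w x t ∧
  pdt w x t = -(1/4) * pdx (pdx (pdx u)) x t + w x t * pdx u x t
    + 1/2 * u x t * pdx w x t

/-- `f : ℝ × ℝ → ℝ` (curried) is smooth in both variables jointly. -/
def Smooth2 (f : ℝ → ℝ → ℝ) : Prop := ContDiff ℝ (⊤ : ℕ∞) (fun p : ℝ × ℝ => f p.1 p.2)


set_option maxHeartbeats 1600000 in
/-- The explicit similarity solution obtained from the Galilean-boost
reduction solves the three-field Kaup–Boussinesq system on `ℝ × (0,∞)`. -/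
theorem stmt_10 (c₁ c₂ c₃ : ℝ) :
    ∀ x t : ℝ, 0 < t →
      KBAt (fun x t => c₁ / t - 6 * x / (5 * t))
        (fun x t => -c₁^2 / (3 * t^2) + c₂ * t ^ ((-4 : ℝ)/5)
          + 4 * c₁ * x / (5 * t^2) - 12 * x^2 / (25 * t^2))
        (fun x t => -(c₁ * c₂) / (3 * t ^ ((9 : ℝ)/5)) + c₁^3 / (27 * t^3)
          + c₃ * t ^ ((-6 : ℝ)/5) - 2 * c₁^2 * x / (15 * t^3)
          + 2 * c₂ * x / (5 * t ^ ((9 : ℝ)/5)) + 4 * c₁ * x^2 / (25 * t^3)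
          - 8 * x^3 / (125 * t^3)) x t := by
  intro x t ht
  have ht' : t ≠ 0 := ht.ne'
  obtain ⟨p, hp0, hpt⟩ : ∃ p : ℝ, 0 < p ∧ p = t ^ ((1:ℝ)/5) :=
    ⟨_, Real.rpow_pos_of_pos ht _, rfl⟩
  have key : ∀ (a : ℝ) (k : ℕ), a = (k:ℝ)/5 → t ^ a = p ^ k := by
    intro a k hak
    rw [hak, hpt, ← Real.rpow_natCast (t ^ ((1:ℝ)/5)) k, ← Real.rpow_mul ht.le]
    congr 1
    ring
  have keyneg : ∀ (a : ℝ) (k : ℕ), a = -((k:ℝ)/5) → t ^ a = (p ^ k)⁻¹ := by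
    intro a k hak
    rw [hak, Real.rpow_neg ht.le, key ((k:ℝ)/5) k rfl]
  have ht5 : t = p ^ 5 := by
    have h := key 1 5 (by norm_num)
    simpa using h
  -- space derivatives
  have hux : ∀ y : ℝ, HasDerivAt (fun z : ℝ => c₁ / t - 6 * z / (5 * t))
      (0 - 6 * 1 / (5 * t)) y := fun y =>
    (hasDerivAt_const y (c₁ / t)).sub (((hasDerivAt_id' y).const_mul 6).div_const (5 * t))
  have hvx : HasDerivAt (fun y : ℝ => -c₁^2 / (3 * t^2) + c₂ * t ^ ((-4 : ℝ)/5)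
        + 4 * c₁ * y / (5 * t^2) - 12 * y^2 / (25 * t^2))
      (0 + 4 * c₁ * 1 / (5 * t^2) - 12 * ((2:ℕ) * x^(2-1)) / (25 * t^2)) x :=
    ((hasDerivAt_const x (-c₁^2 / (3 * t^2) + c₂ * t ^ ((-4 : ℝ)/5))).add
      (((hasDerivAt_id' x).const_mul (4 * c₁)).div_const (5 * t^2))).sub
      (((hasDerivAt_pow 2 x).const_mul 12).div_const (25 * t^2))
  have hwx : HasDerivAt (fun y : ℝ => -(c₁ * c₂) / (3 * t ^ ((9 : ℝ)/5)) + c₁^3 / (27 * t^3)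
        + c₃ * t ^ ((-6 : ℝ)/5) - 2 * c₁^2 * y / (15 * t^3)
        + 2 * c₂ * y / (5 * t ^ ((9 : ℝ)/5)) + 4 * c₁ * y^2 / (25 * t^3)
        - 8 * y^3 / (125 * t^3))
      (0 - 2 * c₁^2 * 1 / (15 * t^3) + 2 * c₂ * 1 / (5 * t ^ ((9 : ℝ)/5))
        + 4 * c₁ * ((2:ℕ) * x^(2-1)) / (25 * t^3)
        - 8 * ((3:ℕ) * x^(3-1)) / (125 * t^3)) x :=
    ((((hasDerivAt_const x (-(c₁ * c₂) / (3 * t ^ ((9 : ℝ)/5)) + c₁^3 / (27 * t^3)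
        + c₃ * t ^ ((-6 : ℝ)/5))).sub
      (((hasDerivAt_id' x).const_mul (2 * c₁^2)).div_const (15 * t^3))).add
      (((hasDerivAt_id' x).const_mul (2 * c₂)).div_const (5 * t ^ ((9 : ℝ)/5)))).add
      (((hasDerivAt_pow 2 x).const_mul (4 * c₁)).div_const (25 * t^3))).sub
      (((hasDerivAt_pow 3 x).const_mul 8).div_const (125 * t^3))
  -- time derivatives
  have hut : HasDerivAt (fun s : ℝ => c₁ / s - 6 * x / (5 * s))
      ((0 * t - c₁ * 1) / t^2 - (0 * (5 * t) - 6 * x * (5 * 1)) / (5 * t)^2) t :=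
    ((hasDerivAt_const t c₁).div (hasDerivAt_id' t) ht').sub
      ((hasDerivAt_const t (6 * x)).div ((hasDerivAt_id' t).const_mul 5) (by positivity))
  have hvt : HasDerivAt (fun s : ℝ => -c₁^2 / (3 * s^2) + c₂ * s ^ ((-4 : ℝ)/5)
        + 4 * c₁ * x / (5 * s^2) - 12 * x^2 / (25 * s^2))
      ((0 * (3 * t^2) - -c₁^2 * (3 * ((2:ℕ) * t^(2-1)))) / (3 * t^2)^2
        + c₂ * ((-4 : ℝ)/5 * t ^ ((-4 : ℝ)/5 - 1))
        + (0 * (5 * t^2) - 4 * c₁ * x * (5 * ((2:ℕ) * t^(2-1)))) / (5 * t^2)^2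
        - (0 * (25 * t^2) - 12 * x^2 * (25 * ((2:ℕ) * t^(2-1)))) / (25 * t^2)^2) t :=
    ((((hasDerivAt_const t (-c₁^2)).div ((hasDerivAt_pow 2 t).const_mul 3) (by positivity)).add
      ((Real.hasDerivAt_rpow_const (p := (-4:ℝ)/5) (Or.inl ht')).const_mul c₂)).add
      ((hasDerivAt_const t (4 * c₁ * x)).div ((hasDerivAt_pow 2 t).const_mul 5)
        (by positivity))).sub
      ((hasDerivAt_const t (12 * x^2)).div ((hasDerivAt_pow 2 t).const_mul 25) (by positivity))
  have hwt : HasDerivAt (fun s : ℝ => -(c₁ * c₂) / (3 * s ^ ((9 : ℝ)/5)) + c₁^3 / (27 * s^3)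
        + c₃ * s ^ ((-6 : ℝ)/5) - 2 * c₁^2 * x / (15 * s^3)
        + 2 * c₂ * x / (5 * s ^ ((9 : ℝ)/5)) + 4 * c₁ * x^2 / (25 * s^3)
        - 8 * x^3 / (125 * s^3))
      ((0 * (3 * t ^ ((9 : ℝ)/5)) - -(c₁ * c₂) * (3 * ((9 : ℝ)/5 * t ^ ((9 : ℝ)/5 - 1))))
          / (3 * t ^ ((9 : ℝ)/5))^2
        + (0 * (27 * t^3) - c₁^3 * (27 * ((3:ℕ) * t^(3-1)))) / (27 * t^3)^2
        + c₃ * ((-6 : ℝ)/5 * t ^ ((-6 : ℝ)/5 - 1))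
        - (0 * (15 * t^3) - 2 * c₁^2 * x * (15 * ((3:ℕ) * t^(3-1)))) / (15 * t^3)^2
        + (0 * (5 * t ^ ((9 : ℝ)/5)) - 2 * c₂ * x * (5 * ((9 : ℝ)/5 * t ^ ((9 : ℝ)/5 - 1))))
          / (5 * t ^ ((9 : ℝ)/5))^2
        + (0 * (25 * t^3) - 4 * c₁ * x^2 * (25 * ((3:ℕ) * t^(3-1)))) / (25 * t^3)^2
        - (0 * (125 * t^3) - 8 * x^3 * (125 * ((3:ℕ) * t^(3-1)))) / (125 * t^3)^2) t :=
    ((((((hasDerivAt_const t (-(c₁ * c₂))).div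
        ((Real.hasDerivAt_rpow_const (p := (9:ℝ)/5) (Or.inl ht')).const_mul 3)
        (by positivity)).add
      ((hasDerivAt_const t (c₁^3)).div ((hasDerivAt_pow 3 t).const_mul 27) (by positivity))).add
      ((Real.hasDerivAt_rpow_const (p := (-6:ℝ)/5) (Or.inl ht')).const_mul c₃)).sub
      ((hasDerivAt_const t (2 * c₁^2 * x)).div ((hasDerivAt_pow 3 t).const_mul 15)
        (by positivity))).add
      ((hasDerivAt_const t (2 * c₂ * x)).div
        ((Real.hasDerivAt_rpow_const (p := (9:ℝ)/5) (Or.inl ht')).const_mul 5)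
        (by positivity))).add
      ((hasDerivAt_const t (4 * c₁ * x^2)).div ((hasDerivAt_pow 3 t).const_mul 25)
        (by positivity)) |>.sub
      ((hasDerivAt_const t (8 * x^3)).div ((hasDerivAt_pow 3 t).const_mul 125) (by positivity))
  -- third space derivative of u vanishes
  have h3 : pdx (pdx (pdx (fun x t => c₁ / t - 6 * x / (5 * t)))) x t = 0 := by
    have e1 : ∀ y : ℝ, deriv (fun z : ℝ => c₁ / t - 6 * z / (5 * t)) y = 0 - 6 * 1 / (5 * t) :=
      fun y => (hux y).deriv
    simp only [pdx, e1, deriv_const']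
  have e4 : t ^ ((-4 : ℝ)/5) = (p ^ 4)⁻¹ := keyneg _ 4 (by norm_num)
  have e9i : t ^ ((-4 : ℝ)/5 - 1) = (p ^ 9)⁻¹ := keyneg _ 9 (by norm_num)
  have e9 : t ^ ((9 : ℝ)/5) = p ^ 9 := key _ 9 (by norm_num)
  have e4p : t ^ ((9 : ℝ)/5 - 1) = p ^ 4 := key _ 4 (by norm_num)
  have e6 : t ^ ((-6 : ℝ)/5) = (p ^ 6)⁻¹ := keyneg _ 6 (by norm_num)
  have e11 : t ^ ((-6 : ℝ)/5 - 1) = (p ^ 11)⁻¹ := keyneg _ 11 (by norm_num)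
  refine ⟨?_, ?_, ?_⟩
  · simp only [pdx, pdt]
    rw [hut.deriv, (hux x).deriv, hvx.deriv]
    rw [ht5]
    norm_num
    field_simp
    ring
  · simp only [pdx, pdt]
    rw [hvt.deriv, (hux x).deriv, hvx.deriv, hwx.deriv, e4, e9i, e9]
    rw [ht5]
    norm_num
    field_simp
    ring
  · rw [h3]
    simp only [pdx, pdt]
    rw [hwt.deriv, (hux x).deriv, hwx.deriv, e9, e4p, e6, e11]
    rw [ht5]
    norm_num
    field_simp
    ring
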